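/- arXiv:2602.21189 — 3 statements merged into one kernel-verified Lean document; each statement's English description precedes it below -/
import Mathlib

section
/- Suppose the kernel κ_θ(x,x') := ⟨∇p_θ(x), ∇p_θ(x')⟩ is nonnegative for all pairs (x,x') in the support of D × D. Then for all integers k, m ≥ 1, ⟨∇J_k(θ), ∇J_m(θ)⟩ ≥ 0. -/
open Finset RealInnerProductSpace

/-- No interference implies no conflict: if the kernel `κ(x,x') = ⟪∇p(x), ∇p(x')⟫` is
nonnegative on the support of `D × D`, then for all `k, m ≥ 1` the pass@k and pass@m
gradients satisfy `⟪∇J_k, ∇J_m⟫ ≥ 0`. -/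
theorem no_interference_no_conflict
    {E : Type*} [NormedAddCommGroup E] [InnerProductSpace ℝ E]
    {X : Type*} [Fintype X] (D : X → ℝ) (hD : ∀ x, 0 ≤ D x) (hD1 : ∑ x, D x = 1)
    (p : X → ℝ) (hp : ∀ x, p x ∈ Set.Icc (0:ℝ) 1)
    (g : X → E)
    (hker : ∀ x x', D x ≠ 0 → D x' ≠ 0 → 0 ≤ ⟪g x, g x'⟫)
    (k m : ℕ) (hk : 1 ≤ k) (hm : 1 ≤ m) :
    0 ≤ ⟪∑ x, (D x * ((k : ℝ) * (1 - p x) ^ (k - 1))) • g x,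
         ∑ x, (D x * ((m : ℝ) * (1 - p x) ^ (m - 1))) • g x⟫ := by
  rw [inner_sum]
  apply Finset.sum_nonneg
  intro x' _
  rw [real_inner_smul_right, sum_inner]
  by_cases hx' : D x' = 0
  · simp [hx']
  apply mul_nonneg
  · apply mul_nonneg (hD x')
    exact mul_nonneg (Nat.cast_nonneg m) (pow_nonneg (by linarith [(hp x').2]) _)
  apply Finset.sum_nonneg
  intro x _
  rw [real_inner_smul_left]
  by_cases hx : D x = 0
  · simp [hx]
  apply mul_nonneg
  · apply mul_nonneg (hD x)
    exact mul_nonneg (Nat.cast_nonneg k) (pow_nonneg (by linarith [(hp x).2]) _)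
  exact hker x x' hx hx'
end

section
/- Let 0 ≤ ε < δ ≤ 1, m, G > 0, and q ∈ (0,1). Suppose p_θ(x) ≤ ε and a_θ(x) ≤ −m for x in a set of probability at least q, while p_θ(x) ≥ δ and a_θ(x) ≤ G² elsewhere. Then ⟨∇J_k(θ), ∇J_1(θ)⟩ ≤ −k[(1−ε)^{k−1} m q − (1−δ)^{k−1} G² (1−q)]. Moreover, if k > 1 + log((1−q)G²/(qm)) / log((1−ε)/(1−δ)), then ⟨∇J_k(θ), ∇J_1(θ)⟩ < 0. -/
open Finset RealInnerProductSpace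

set_option maxHeartbeats 1000000 in
/-- Influence of `k`: if the `m`-strongly negatively interfering set `S` has mass at least
`q`, with `p_θ(x) ≤ ε` and `a_θ(x) ≤ −m` on `S`, and `p_θ(x) ≥ δ`, `a_θ(x) ≤ G²` off `S`,
then `⟪∇J_k, ∇J_1⟫ ≤ −k[(1−ε)^{k−1} m q − (1−δ)^{k−1} G² (1−q)]`; moreover gradient
conflict `⟪∇J_k, ∇J_1⟫ < 0` holds for all
`k > 1 + log((1−q)G²/(qm)) / log((1−ε)/(1−δ))`. -/
theorem influence_of_k_gradient_conflict
    {E : Type*} [NormedAddCommGroup E] [InnerProductSpace ℝ E]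
    {X : Type*} [Fintype X] (D : X → ℝ) (hD : ∀ x, 0 ≤ D x) (hD1 : ∑ x, D x = 1)
    (p : X → ℝ) (hp : ∀ x, p x ∈ Set.Icc (0:ℝ) 1)
    (g : X → E) (k : ℕ) (hk : 1 ≤ k)
    (w : X → ℝ) (hw : ∀ x, w x = (k : ℝ) * (1 - p x) ^ (k - 1))
    (J1grad : E) (hJ1 : J1grad = ∑ x, D x • g x)
    (Jkgrad : E) (hJk : Jkgrad = ∑ x, (D x * w x) • g x)
    (a : X → ℝ) (ha : ∀ x, a x = ⟪g x, J1grad⟫)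
    (ε δ m G q : ℝ) (hε : 0 ≤ ε) (hεδ : ε < δ) (hδ : δ ≤ 1)
    (hm : 0 < m) (hG : 0 < G) (hq0 : 0 < q) (hq1 : q < 1)
    (S : Finset X) (hSmass : q ≤ ∑ x ∈ S, D x)
    (hShard : ∀ x ∈ S, p x ≤ ε ∧ a x ≤ -m)
    (hSc : ∀ x ∉ S, δ ≤ p x ∧ a x ≤ G ^ 2) :
    ⟪Jkgrad, J1grad⟫ ≤
      -((k : ℝ) * ((1 - ε) ^ (k - 1) * m * q - (1 - δ) ^ (k - 1) * G ^ 2 * (1 - q))) ∧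
    ((k : ℝ) > 1 + Real.log ((1 - q) * G ^ 2 / (q * m)) / Real.log ((1 - ε) / (1 - δ)) →
      ⟪Jkgrad, J1grad⟫ < 0) := by
  classical
  have hε1 : ε < 1 := lt_of_lt_of_le hεδ hδ
  have hkpos : (0:ℝ) < k := by exact_mod_cast hk
  have hinner : ⟪Jkgrad, J1grad⟫ = ∑ x, D x * w x * a x := by
    rw [hJk, sum_inner]
    refine Finset.sum_congr rfl fun x _ => ?_
    rw [real_inner_smul_left, ha]
  -- term bounds
  set W : ℝ := (k : ℝ) * (1 - ε) ^ (k - 1) with hW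
  set V : ℝ := (k : ℝ) * (1 - δ) ^ (k - 1) with hV
  have hWnn : 0 ≤ W := mul_nonneg hkpos.le (pow_nonneg (by linarith) _)
  have hVnn : 0 ≤ V := mul_nonneg hkpos.le (pow_nonneg (by linarith) _)
  have hsumS : ∑ x ∈ S, D x * w x * a x ≤ -(W * m * q) := by
    have h1 : ∑ x ∈ S, D x * w x * a x ≤ ∑ x ∈ S, D x * (-(W * m)) := by
      refine Finset.sum_le_sum fun x hx => ?_
      obtain ⟨hpe, ham⟩ := hShard x hx
      have hwx : W ≤ w x := by
        rw [hw, hW]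
        have : (1 - ε) ^ (k-1) ≤ (1 - p x) ^ (k-1) :=
          pow_le_pow_left₀ (by linarith) (by linarith) _
        nlinarith
      have hwnn : 0 ≤ w x := le_trans hWnn hwx
      have : w x * a x ≤ -(W * m) := by nlinarith
      calc D x * w x * a x = D x * (w x * a x) := by ring
        _ ≤ D x * (-(W * m)) := mul_le_mul_of_nonneg_left this (hD x)
    rw [← Finset.sum_mul] at h1
    have : (∑ x ∈ S, D x) * (-(W*m)) ≤ q * (-(W*m)) := by
      apply mul_le_mul_of_nonpos_right hSmass (by nlinarith)
    linarith
  have hsumSc : ∑ x ∈ Sᶜ, D x * w x * a x ≤ V * G ^ 2 * (1 - q) := by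
    have h1 : ∑ x ∈ Sᶜ, D x * w x * a x ≤ ∑ x ∈ Sᶜ, D x * (V * G ^ 2) := by
      refine Finset.sum_le_sum fun x hx => ?_
      rw [Finset.mem_compl] at hx
      obtain ⟨hpd, haG⟩ := hSc x hx
      obtain ⟨hp0, hp1⟩ := hp x
      have hwx : w x ≤ V := by
        rw [hw, hV]
        have : (1 - p x) ^ (k-1) ≤ (1 - δ) ^ (k-1) :=
          pow_le_pow_left₀ (by linarith) (by linarith) _
        nlinarith
      have hwnn : 0 ≤ w x := by
        rw [hw]; exact mul_nonneg hkpos.le (pow_nonneg (by linarith) _)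
      have : w x * a x ≤ V * G ^ 2 := by nlinarith
      calc D x * w x * a x = D x * (w x * a x) := by ring
        _ ≤ D x * (V * G ^ 2) := mul_le_mul_of_nonneg_left this (hD x)
    rw [← Finset.sum_mul] at h1
    have hScmass : ∑ x ∈ Sᶜ, D x ≤ 1 - q := by
      have := Finset.sum_add_sum_compl S D
      linarith [hD1 ▸ this]
    have : (∑ x ∈ Sᶜ, D x) * (V * G ^ 2) ≤ (1 - q) * (V * G ^ 2) := by
      apply mul_le_mul_of_nonneg_right hScmass (by positivity)
    linarith
  have hmain : ⟪Jkgrad, J1grad⟫ ≤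
      -((k : ℝ) * ((1 - ε) ^ (k - 1) * m * q - (1 - δ) ^ (k - 1) * G ^ 2 * (1 - q))) := by
    rw [hinner, ← Finset.sum_add_sum_compl S]
    have : -(W * m * q) + V * G ^ 2 * (1 - q)
        = -((k : ℝ) * ((1 - ε) ^ (k - 1) * m * q - (1 - δ) ^ (k - 1) * G ^ 2 * (1 - q))) := by
      rw [hW, hV]; ring
    linarith [hsumS, hsumSc]
  refine ⟨hmain, fun hkbig => ?_⟩
  have hpos : (1 - δ) ^ (k - 1) * G ^ 2 * (1 - q) < (1 - ε) ^ (k - 1) * m * q := by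
    by_cases hδ1 : δ = 1
    · subst hδ1
      have hlog : Real.log ((1 - ε) / (1 - 1)) = 0 := by
        simp
      rw [hlog, div_zero, add_zero] at hkbig
      have hk2 : 2 ≤ k := by exact_mod_cast (by exact_mod_cast hkbig : (1:ℝ) < k)
      have : (1 - (1:ℝ)) ^ (k - 1) = 0 := by
        simp [zero_pow, Nat.sub_ne_zero_of_lt hk2]
      rw [this]
      have : (0:ℝ) < (1 - ε) ^ (k - 1) * m * q :=
        mul_pos (mul_pos (pow_pos (by linarith) _) hm) hq0
      linarith
    · have hδ1' : δ < 1 := lt_of_le_of_ne hδ hδ1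
      have hr : (1:ℝ) < (1 - ε) / (1 - δ) := by
        rw [lt_div_iff₀ (by linarith)]; linarith
      have hlogr : 0 < Real.log ((1 - ε) / (1 - δ)) := Real.log_pos hr
      have hc : 0 < (1 - q) * G ^ 2 / (q * m) :=
        div_pos (mul_pos (by linarith) (by positivity)) (mul_pos hq0 hm)
      have hstep : Real.log ((1 - q) * G ^ 2 / (q * m)) <
          ((k:ℝ) - 1) * Real.log ((1 - ε) / (1 - δ)) := by
        have := (div_lt_iff₀ hlogr).mp (by linarith : Real.log ((1 - q) * G ^ 2 / (q * m)) / Real.log ((1 - ε) / (1 - δ)) < (k:ℝ) - 1)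
        linarith
      have hcast : ((k - 1 : ℕ) : ℝ) = (k:ℝ) - 1 := by
        rw [Nat.cast_sub hk]; norm_num
      have hlogpow : Real.log (((1 - ε) / (1 - δ)) ^ (k - 1))
          = ((k:ℝ) - 1) * Real.log ((1 - ε) / (1 - δ)) := by
        rw [Real.log_pow, hcast]
      have hpow : (1 - q) * G ^ 2 / (q * m) < ((1 - ε) / (1 - δ)) ^ (k - 1) := by
        have h2 : Real.log ((1 - q) * G ^ 2 / (q * m)) <
            Real.log (((1 - ε) / (1 - δ)) ^ (k - 1)) := by rw [hlogpow]; exact hstep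
        have hpowpos : (0:ℝ) < ((1 - ε) / (1 - δ)) ^ (k - 1) := by
          apply pow_pos; apply div_pos <;> linarith
        exact (Real.log_lt_log_iff hc hpowpos).mp h2
      rw [div_pow] at hpow
      have hqm : (0:ℝ) < q * m := mul_pos hq0 hm
      have hC : (0:ℝ) < (1 - δ) ^ (k - 1) := pow_pos (by linarith) _
      have h3 := (div_lt_div_iff₀ hqm hC).mp hpow
      nlinarith [h3]
  have : (0:ℝ) < (k : ℝ) * ((1 - ε) ^ (k - 1) * m * q - (1 - δ) ^ (k - 1) * G ^ 2 * (1 - q)) := by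
    apply mul_pos hkpos; linarith
  linarith
end

section
/- Suppose for each prompt x the map θ ↦ p_θ(x) takes values in [0,1], is twice differentiable, with ‖∇p_θ(x)‖ ≤ G and ‖∇²p_θ(x)‖ ≤ G² + F for all θ. Then for every integer k ≥ 1, the pass@k objective J_k(θ) = E_x[1−(1−p_θ(x))^k] is L_k-smooth with L_k = k²G² + kF, i.e., ‖∇²J_k(θ)‖ ≤ k²G² + kF for all θ. -/
/-!
Write `J_k = ∑ₓ D x · ψ_k(p_θ(x))` with `ψ_k(t) = 1 - (1 - t)^k`. By the chain rule
`∇²(ψ_k ∘ p) = ψ_k'(p) ∇²p + ψ_k''(p) ∇p ∇pᵀ`, and on `[0,1]` we have `|ψ_k'| ≤ k` and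
`|ψ_k''| ≤ k(k-1)`, so each summand has Hessian norm at most
`k (G² + F) + k(k-1) G² = k² G² + k F`; averaging over the prompts keeps this bound.
-/

open Finset

/-- The probability that at least one of `k` independent attempts succeeds, each with
probability `t`. -/
def passAtK (k : ℕ) (t : ℝ) : ℝ := 1 - (1 - t) ^ k

theorem contDiff_passAtK (k : ℕ) {n : WithTop ℕ∞} : ContDiff ℝ n (passAtK k) := by
  unfold passAtK; fun_prop

theorem deriv_passAtK (k : ℕ) : deriv (passAtK k) = fun t : ℝ => k * (1 - t) ^ (k - 1) := by
  funext t
  have h := ((hasDerivAt_id t).const_sub 1).fun_pow k |>.const_sub 1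
  exact h.deriv.trans (by simp)

theorem deriv_deriv_passAtK (k : ℕ) :
    deriv (deriv (passAtK k)) = fun t : ℝ => -(k * (k - 1 : ℕ) * (1 - t) ^ (k - 2)) := by
  funext t
  have h := (((hasDerivAt_id t).const_sub 1).fun_pow (k - 1)).const_mul (k : ℝ)
  rw [deriv_passAtK]
  exact h.deriv.trans (by simp [Nat.sub_sub]; ring)

theorem abs_deriv_passAtK_le (k : ℕ) {t : ℝ} (ht : t ∈ Set.Icc 0 1) :
    |deriv (passAtK k) t| ≤ k := by
  have h₀ : 0 ≤ 1 - t := by linarith [ht.2]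
  have h₁ : 1 - t ≤ 1 := by linarith [ht.1]
  rw [deriv_passAtK, abs_of_nonneg (by positivity)]
  exact mul_le_of_le_one_right (Nat.cast_nonneg k) (pow_le_one₀ h₀ h₁)

theorem abs_deriv_deriv_passAtK_le (k : ℕ) {t : ℝ} (ht : t ∈ Set.Icc 0 1) :
    |deriv (deriv (passAtK k)) t| ≤ k * (k - 1) := by
  have h₀ : 0 ≤ 1 - t := by linarith [ht.2]
  have h₁ : 1 - t ≤ 1 := by linarith [ht.1]
  have hk : (k : ℝ) * (k - 1 : ℕ) = k * (k - 1) := by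
    rcases Nat.eq_zero_or_pos k with rfl | hk
    · simp
    · rw [Nat.cast_sub hk, Nat.cast_one]
  rw [deriv_deriv_passAtK, abs_neg, abs_of_nonneg (by positivity), ← hk]
  exact mul_le_of_le_one_right (by positivity) (pow_le_one₀ h₀ h₁)

section Hessian

variable {E : Type*} [NormedAddCommGroup E] [NormedSpace ℝ E]

theorem fderiv_fderiv_comp {φ : ℝ → ℝ} {P : E → ℝ} (hφ : ContDiff ℝ 2 φ) (hP : ContDiff ℝ 2 P)
    (θ : E) :
    fderiv ℝ (fderiv ℝ (φ ∘ P)) θ =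
      deriv φ (P θ) • fderiv ℝ (fderiv ℝ P) θ +
        (deriv (deriv φ) (P θ) • fderiv ℝ P θ).smulRight (fderiv ℝ P θ) := by
  have hφd : Differentiable ℝ φ := hφ.differentiable (by norm_num)
  have hφ'd : Differentiable ℝ (deriv φ) := (hφ.iterate_deriv' 1 1).differentiable (by norm_num)
  have hPd : Differentiable ℝ P := hP.differentiable (by norm_num)
  have hP'd : Differentiable ℝ (fderiv ℝ P) :=
    (hP.fderiv_right (m := 1) (by norm_num)).differentiable (by norm_num)
  have h_first : fderiv ℝ (φ ∘ P) = fun θ' => deriv φ (P θ') • fderiv ℝ P θ' := by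
    funext θ'
    exact ((hφd _).hasDerivAt.comp_hasFDerivAt θ' (hPd θ').hasFDerivAt).fderiv
  rw [h_first]
  have h_coeff := (hφ'd (P θ)).hasDerivAt.comp_hasFDerivAt θ (hPd θ).hasFDerivAt
  exact (h_coeff.smul (hP'd θ).hasFDerivAt).fderiv

theorem norm_fderiv_fderiv_comp_le {φ : ℝ → ℝ} {P : E → ℝ} (hφ : ContDiff ℝ 2 φ)
    (hP : ContDiff ℝ 2 P) (θ : E) :
    ‖fderiv ℝ (fderiv ℝ (φ ∘ P)) θ‖ ≤
      |deriv φ (P θ)| * ‖fderiv ℝ (fderiv ℝ P) θ‖ +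
        |deriv (deriv φ) (P θ)| * ‖fderiv ℝ P θ‖ ^ 2 := by
  rw [fderiv_fderiv_comp hφ hP]
  refine (ContinuousLinearMap.opNorm_add_le _ _).trans (add_le_add ?_ ?_)
  · exact (ContinuousLinearMap.opNorm_smul_le _ _).trans_eq (by rw [Real.norm_eq_abs])
  · rw [ContinuousLinearMap.norm_smulRight_apply, sq, ← mul_assoc]
    refine mul_le_mul_of_nonneg_right ?_ (norm_nonneg _)
    exact (ContinuousLinearMap.opNorm_smul_le _ _).trans_eq (by rw [Real.norm_eq_abs])

theorem fderiv_fderiv_sum_mul {X : Type*} [Fintype X] {f : X → E → ℝ}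
    (hf : ∀ x, ContDiff ℝ 2 (f x)) (D : X → ℝ) (θ : E) :
    fderiv ℝ (fderiv ℝ (fun θ' => ∑ x, D x * f x θ')) θ =
      ∑ x, D x • fderiv ℝ (fderiv ℝ (f x)) θ := by
  have hfd x : Differentiable ℝ (f x) := (hf x).differentiable (by norm_num)
  have hf'd x : Differentiable ℝ (fderiv ℝ (f x)) :=
    ((hf x).fderiv_right (m := 1) (by norm_num)).differentiable (by norm_num)
  have h_first : fderiv ℝ (fun θ' => ∑ x, D x * f x θ') =
      fun θ' => ∑ x, D x • fderiv ℝ (f x) θ' := by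
    funext θ'
    exact (HasFDerivAt.fun_sum fun x _ => ((hfd x θ').hasFDerivAt.const_mul (D x))).fderiv
  rw [h_first]
  exact (HasFDerivAt.fun_sum fun x _ => ((hf'd x θ).hasFDerivAt.const_smul (D x))).fderiv

theorem norm_fderiv_fderiv_sum_mul_le {X : Type*} [Fintype X] {f : X → E → ℝ}
    (hf : ∀ x, ContDiff ℝ 2 (f x)) {D : X → ℝ} (hD : ∀ x, 0 ≤ D x) (hD1 : ∑ x, D x = 1)
    {L : ℝ} (θ : E) (hL : ∀ x, ‖fderiv ℝ (fderiv ℝ (f x)) θ‖ ≤ L) :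
    ‖fderiv ℝ (fderiv ℝ (fun θ' => ∑ x, D x * f x θ')) θ‖ ≤ L := by
  rw [fderiv_fderiv_sum_mul hf]
  calc ‖∑ x, D x • fderiv ℝ (fderiv ℝ (f x)) θ‖
      ≤ ∑ x, D x * ‖fderiv ℝ (fderiv ℝ (f x)) θ‖ := by
        refine (norm_sum_le univ fun x => D x • fderiv ℝ (fderiv ℝ (f x)) θ).trans
          (sum_le_sum fun x _ => ?_)
        exact (ContinuousLinearMap.opNorm_smul_le (D x) (fderiv ℝ (fderiv ℝ (f x)) θ)).trans_eq
          (by rw [Real.norm_of_nonneg (hD x)])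
    _ ≤ ∑ x, D x * L := sum_le_sum fun x _ => mul_le_mul_of_nonneg_left (hL x) (hD x)
    _ = L := by rw [← sum_mul, hD1, one_mul]

theorem norm_fderiv_fderiv_passAtK_comp_le {P : E → ℝ} (hP : ContDiff ℝ 2 P) {θ : E}
    (hP01 : P θ ∈ Set.Icc 0 1) {G H : ℝ}
    (hG : ‖fderiv ℝ P θ‖ ≤ G) (hH : ‖fderiv ℝ (fderiv ℝ P) θ‖ ≤ H) (k : ℕ) :
    ‖fderiv ℝ (fderiv ℝ (passAtK k ∘ P)) θ‖ ≤ k * H + k * (k - 1) * G ^ 2 := by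
  have hG2 : ‖fderiv ℝ P θ‖ ^ 2 ≤ G ^ 2 := pow_le_pow_left₀ (norm_nonneg _) hG 2
  refine (norm_fderiv_fderiv_comp_le (contDiff_passAtK k) hP θ).trans (add_le_add ?_ ?_)
  · exact mul_le_mul (abs_deriv_passAtK_le k hP01) hH (ContinuousLinearMap.opNorm_nonneg _)
      (Nat.cast_nonneg k)
  · have h := abs_deriv_deriv_passAtK_le k hP01
    exact mul_le_mul h hG2 (by positivity) ((abs_nonneg _).trans h)

end Hessian

theorem passk_smoothness_general
    {E : Type*} [NormedAddCommGroup E] [NormedSpace ℝ E]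
    {X : Type*} [Fintype X] (D : X → ℝ) (hD : ∀ x, 0 ≤ D x) (hD1 : ∑ x, D x = 1)
    (p : X → E → ℝ)
    (hp01 : ∀ x θ, p x θ ∈ Set.Icc (0:ℝ) 1)
    (hC2 : ∀ x, ContDiff ℝ 2 (p x))
    (G F : ℝ)
    (hgrad : ∀ x θ, ‖fderiv ℝ (p x) θ‖ ≤ G)
    (hhess : ∀ x θ, ‖fderiv ℝ (fderiv ℝ (p x)) θ‖ ≤ G ^ 2 + F)
    (k : ℕ) :
    ∀ θ : E,
      ‖fderiv ℝ (fderiv ℝ (fun θ' => ∑ x, D x * (1 - (1 - p x θ') ^ k))) θ‖ ≤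
        (k : ℝ) ^ 2 * G ^ 2 + (k : ℝ) * F := by
  intro θ
  refine norm_fderiv_fderiv_sum_mul_le (f := fun x => passAtK k ∘ p x)
    (fun x => (contDiff_passAtK k).comp (hC2 x)) hD hD1 θ fun x => ?_
  calc _ ≤ k * (G ^ 2 + F) + k * (k - 1) * G ^ 2 :=
        norm_fderiv_fderiv_passAtK_comp_le (hC2 x) (hp01 x θ) (hgrad x θ) (hhess x θ) k
    _ = k ^ 2 * G ^ 2 + k * F := by ring

/-- Smoothness of pass@k: if each `θ ↦ p_θ(x)` takes values in `[0,1]`, is `C²`, with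
`‖∇p_θ(x)‖ ≤ G` and `‖∇²p_θ(x)‖ ≤ G² + F`, then the pass@k objective
`J_k(θ) = E_x[1−(1−p_θ(x))^k]` (finite prompt distribution) satisfies
`‖∇²J_k(θ)‖ ≤ k²G² + kF` for all `θ`, i.e. `J_k` is `L_k`-smooth with `L_k = k²G² + kF`. -/
theorem passk_smoothness
    {E : Type*} [NormedAddCommGroup E] [NormedSpace ℝ E]
    {X : Type*} [Fintype X] (D : X → ℝ) (hD : ∀ x, 0 ≤ D x) (hD1 : ∑ x, D x = 1)
    (p : X → E → ℝ)
    (hp01 : ∀ x θ, p x θ ∈ Set.Icc (0:ℝ) 1)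
    (hC2 : ∀ x, ContDiff ℝ 2 (p x))
    (G F : ℝ) (hG : 0 ≤ G) (hF : 0 ≤ F)
    (hgrad : ∀ x θ, ‖fderiv ℝ (p x) θ‖ ≤ G)
    (hhess : ∀ x θ, ‖fderiv ℝ (fderiv ℝ (p x)) θ‖ ≤ G ^ 2 + F)
    (k : ℕ) (hk : 1 ≤ k) :
    ∀ θ : E,
      ‖fderiv ℝ (fderiv ℝ (fun θ' => ∑ x, D x * (1 - (1 - p x θ') ^ k))) θ‖ ≤
        (k : ℝ) ^ 2 * G ^ 2 + (k : ℝ) * F :=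
  passk_smoothness_general D hD hD1 p hp01 hC2 G F hgrad hhess k
end
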